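/- arXiv:1911.11301 — 6 statements merged into one kernel-verified Lean document; each statement's English description precedes it below -/
import Mathlib

section
/- If x, y ∈ ℂ^d and ⟨x, y⟩ is a nonnegative real number, then ‖x x* − y y*‖_F² ≥ (1/2)‖x‖₂² ‖x − y‖₂², where x x* denotes the outer product matrix. -/
open Finset Complex

theorem stmt_0 (d : ℕ) (x y : Fin d → ℂ)
    (him : (∑ i, x i * starRingEnd ℂ (y i)).im = 0)
    (hre : 0 ≤ (∑ i, x i * starRingEnd ℂ (y i)).re) :
    (1/2) * (∑ i, ‖x i‖^2) * (∑ i, ‖x i - y i‖^2)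
      ≤ ∑ i, ∑ j, ‖x i * starRingEnd ℂ (x j) - y i * starRingEnd ℂ (y j)‖^2 := by
  set T : ℂ := ∑ i, x i * starRingEnd ℂ (y i) with hT
  set a : ℝ := ∑ i, ‖x i‖^2 with ha'
  set b : ℝ := ∑ i, ‖y i‖^2 with hb'
  have ha : 0 ≤ a := Finset.sum_nonneg fun i _ => sq_nonneg _
  have hb : 0 ≤ b := Finset.sum_nonneg fun i _ => sq_nonneg _
  have hnorm : ∀ z : ℂ, ‖z‖^2 = Complex.normSq z := fun z => Complex.sq_norm z
  -- identity 1 : ∑ ‖x i - y i‖² = a + b - 2 * T.re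
  have h1 : (∑ i, ‖x i - y i‖^2) = a + b - 2 * T.re := by
    simp only [hnorm, Complex.normSq_sub, hT, Complex.re_sum]
    rw [Finset.sum_sub_distrib, Finset.sum_add_distrib, ← Finset.mul_sum]
    simp [ha', hb', Complex.sq_norm]
  -- identity 2 : RHS = a² + b² - 2 * normSq T
  have h2 : (∑ i, ∑ j, ‖x i * starRingEnd ℂ (x j) - y i * starRingEnd ℂ (y j)‖^2)
      = a^2 + b^2 - 2 * Complex.normSq T := by
    have key : ∀ i j : Fin d,
        ‖x i * starRingEnd ℂ (x j) - y i * starRingEnd ℂ (y j)‖^2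
        = ‖x i‖^2 * ‖x j‖^2 + ‖y i‖^2 * ‖y j‖^2
          - 2 * ((x i * starRingEnd ℂ (y i)) *
              starRingEnd ℂ (x j * starRingEnd ℂ (y j))).re := by
      intro i j
      rw [hnorm, Complex.normSq_sub, Complex.normSq_mul, Complex.normSq_mul,
        Complex.normSq_conj, Complex.normSq_conj]
      simp only [hnorm]
      congr 1
      congr 1
      congr 1
      simp only [map_mul, Complex.conj_conj]
      ring
    have e3 : (∑ i, ∑ j, ((x i * starRingEnd ℂ (y i)) *
        starRingEnd ℂ (x j * starRingEnd ℂ (y j))).re) = Complex.normSq T := by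
      have : (∑ i, ∑ j, (x i * starRingEnd ℂ (y i)) *
          starRingEnd ℂ (x j * starRingEnd ℂ (y j))) = T * starRingEnd ℂ T := by
        rw [hT, map_sum, Finset.sum_mul_sum]
      calc (∑ i, ∑ j, ((x i * starRingEnd ℂ (y i)) *
              starRingEnd ℂ (x j * starRingEnd ℂ (y j))).re)
          = (∑ i, ∑ j, (x i * starRingEnd ℂ (y i)) *
              starRingEnd ℂ (x j * starRingEnd ℂ (y j))).re := by
            simp [Complex.re_sum]
        _ = (T * starRingEnd ℂ T).re := by rw [this]
        _ = Complex.normSq T := by rw [Complex.mul_conj]; simp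
    simp only [key, Finset.sum_sub_distrib, Finset.sum_add_distrib, ← Finset.mul_sum]
    rw [← Finset.sum_mul, ← Finset.sum_mul, e3, ← ha', ← hb']
    ring
  -- Cauchy-Schwarz : normSq T ≤ a * b
  have h3 : Complex.normSq T ≤ a * b := by
    set X : EuclideanSpace ℂ (Fin d) := (WithLp.equiv 2 (Fin d → ℂ)).symm x
    set Y : EuclideanSpace ℂ (Fin d) := (WithLp.equiv 2 (Fin d → ℂ)).symm y
    have hcs := norm_inner_le_norm (𝕜 := ℂ) X Y
    have hip : (inner ℂ X Y : ℂ) = starRingEnd ℂ T := by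
      rw [PiLp.inner_apply, hT, map_sum]
      exact Finset.sum_congr rfl fun i _ => by
        simp [X, Y, map_mul, mul_comm]
    have hX : ‖X‖ = Real.sqrt a := by
      rw [EuclideanSpace.norm_eq, ha']
      congr 1
    have hY : ‖Y‖ = Real.sqrt b := by
      rw [EuclideanSpace.norm_eq, hb']
      congr 1
    rw [hip, hX, hY] at hcs
    have hnT : ‖starRingEnd ℂ T‖ = Real.sqrt (Complex.normSq T) := by
      rw [Complex.norm_conj, Complex.norm_def]
    rw [hnT] at hcs
    have := mul_self_le_mul_self (Real.sqrt_nonneg _) hcs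
    rwa [Real.mul_self_sqrt (Complex.normSq_nonneg _),
      mul_mul_mul_comm, Real.mul_self_sqrt ha, Real.mul_self_sqrt hb] at this
  have h4 : Complex.normSq T = T.re ^ 2 := by
    rw [Complex.normSq_apply, him]; ring
  have hd : 0 ≤ a + b - 2 * T.re := by
    rw [← h1]; exact Finset.sum_nonneg fun i _ => sq_nonneg _
  rw [h1, h2, h4] at *
  nlinarith [sq_nonneg (a - b), sq_nonneg (a - 2 * T.re), sq_nonneg (b - T.re),
    sq_nonneg (a + b - 2 * T.re), mul_nonneg ha hb, mul_nonneg hre ha,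
    mul_nonneg hre hb, mul_nonneg hd ha, mul_nonneg hd hb, mul_nonneg hd hre]
end

section
/- For all real numbers a, b ≥ 0 and t ∈ [0,1], the quantity h(a,b,t) := a⁴ + b⁴ − 2(ab)² t² − (1/2) a² (a² + b² − 2abt) is nonnegative. -/
/-!
The expression is a concave quadratic in `t`, so on `[0, 1]` it dominates its linear
interpolation between the endpoints. At `t = 0` it is a positive definite binary quartic form
in `a²` and `b²`; at `t = 1` it factors as `(a - b)² (a²/2 + 2ab + b²)`, which is nonnegative
as soon as `ab ≥ 0`.
-/

/-- With `a = ‖x‖`, `b = ‖y‖` and `⟨x, y⟩ = a b t`, this is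
`‖x x* - y y*‖_F² - ½ ‖x‖² ‖x - y‖²`. -/
noncomputable def rankOneGap (a b t : ℝ) : ℝ :=
  a^4 + b^4 - 2*(a*b)^2*t^2 - (1/2)*a^2*(a^2 + b^2 - 2*a*b*t)

lemma rankOneGap_eq_interpolation (a b t : ℝ) :
    rankOneGap a b t =
      (1 - t) * rankOneGap a b 0 + t * rankOneGap a b 1 + 2 * (a*b)^2 * t * (1 - t) := by
  unfold rankOneGap
  ring

lemma rankOneGap_zero_nonneg (a b : ℝ) : 0 ≤ rankOneGap a b 0 := by
  have h : rankOneGap a b 0 = (a^2 - b^2/2)^2 / 2 + 7/8 * b^4 := by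
    unfold rankOneGap
    ring
  rw [h]
  positivity

lemma rankOneGap_one_eq (a b : ℝ) :
    rankOneGap a b 1 = (a - b)^2 * (a^2/2 + 2*(a*b) + b^2) := by
  unfold rankOneGap
  ring

lemma rankOneGap_one_nonneg {a b : ℝ} (hab : 0 ≤ a * b) : 0 ≤ rankOneGap a b 1 := by
  rw [rankOneGap_one_eq]
  positivity

lemma rankOneGap_nonneg {a b t : ℝ} (hab : 0 ≤ a * b) (ht : t ∈ Set.Icc (0:ℝ) 1) :
    0 ≤ rankOneGap a b t := by
  obtain ⟨ht0, ht1⟩ := ht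
  have h1t : 0 ≤ 1 - t := sub_nonneg.mpr ht1
  rw [rankOneGap_eq_interpolation]
  have hcurv : 0 ≤ 2 * (a*b)^2 * t * (1 - t) := by positivity
  have h0 := mul_nonneg h1t (rankOneGap_zero_nonneg a b)
  have h1 := mul_nonneg ht0 (rankOneGap_one_nonneg hab)
  linarith

theorem stmt_1 (a b t : ℝ) (ha : 0 ≤ a) (hb : 0 ≤ b) (ht : t ∈ Set.Icc (0:ℝ) 1) :
    0 ≤ a^4 + b^4 - 2*(a*b)^2*t^2 - (1/2)*a^2*(a^2 + b^2 - 2*a*b*t) :=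
  rankOneGap_nonneg (mul_nonneg ha hb) ht
end

section
/- Convex sparse decomposition: if v ∈ ℝ^p satisfies ‖v‖_∞ ≤ θ and ‖v‖₁ ≤ s·θ for some θ > 0 and positive integer s, then v can be written as a convex combination v = ∑_{i=1}^N λᵢ uᵢ with λᵢ ≥ 0, ∑ λᵢ = 1, where each uᵢ is s-sparse, supp(uᵢ) ⊆ supp(v), ‖uᵢ‖₁ ≤ ‖v‖₁, and ‖uᵢ‖_∞ ≤ θ. -/
/-!
The coordinates of `v` with `0 < |v j| < θ` are called fractional. If at most one coordinate is
fractional, every other nonzero coordinate has modulus `θ`, so `‖v‖₁ ≤ s θ` already forces `v` to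
be `s`-sparse. Otherwise pick two fractional coordinates `i ≠ j` and move `v` along
`sign (v i) eᵢ - sign (v j) eⱼ` in both directions, as far as `|·| ≤ θ` and the signs allow. This
keeps the support and the `ℓ¹` norm, and at each endpoint one of `i, j` stops being fractional,
so by induction on the number of fractional coordinates both endpoints are convex combinations
of admissible sparse vectors, and `v` lies on the segment between them.
-/

open Finset

theorem abs_add_mul_sign {x t : ℝ} (hx : x ≠ 0) (ht : -|x| ≤ t) :
    |x + t * SignType.sign x| = |x| + t := by
  have hsign : |(SignType.sign x : ℝ)| = 1 := by
    rcases hx.lt_or_gt with h | h <;> simp [h]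
  calc |x + t * SignType.sign x| = |(SignType.sign x : ℝ) * (|x| + t)| := by
        congr 1; linear_combination -(sign_mul_abs x)
    _ = |x| + t := by rw [abs_mul, hsign, one_mul, abs_of_nonneg (by linarith)]

theorem mem_segment_add_smul_sub_smul {E : Type*} [AddCommGroup E] [Module ℝ E] (v d : E)
    {a b : ℝ} (ha : 0 < a) (hb : 0 < b) : v ∈ segment ℝ (v + a • d) (v - b • d) := by
  refine ⟨b / (a + b), a / (a + b), by positivity, by positivity,
    by rw [← add_div, add_comm, div_self (by positivity)], ?_⟩
  match_scalars <;> field_simp <;> ring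

theorem exists_fin_of_mem_convexHull {R E : Type*} [Field R] [LinearOrder R]
    [IsStrictOrderedRing R] [AddCommGroup E] [Module R E] {S : Set E} {x : E}
    (hx : x ∈ convexHull R S) :
    ∃ (N : ℕ) (w : Fin N → R) (z : Fin N → E),
      (∀ i, 0 ≤ w i) ∧ ∑ i, w i = 1 ∧ (∀ i, z i ∈ S) ∧ ∑ i, w i • z i = x := by
  obtain ⟨κ, _, w, z, hw₀, hw₁, hz, rfl⟩ := mem_convexHull_iff_exists_fintype.mp hx
  let e := Fintype.equivFin κ
  exact ⟨_, w ∘ e.symm, z ∘ e.symm, fun i => hw₀ _, by rwa [← e.symm.sum_comp] at hw₁,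
    fun i => hz _, e.symm.sum_comp fun i => w i • z i⟩

section

variable {ι : Type*} [DecidableEq ι]

noncomputable def transferDir (v : ι → ℝ) (i j : ι) : ι → ℝ :=
  Pi.single i (SignType.sign (v i) : ℝ) - Pi.single j (SignType.sign (v j) : ℝ)

theorem transferDir_swap (v : ι → ℝ) (i j : ι) : transferDir v j i = -transferDir v i j :=
  (neg_sub _ _).symm

theorem add_smul_transferDir_apply_of_ne {v : ι → ℝ} {i j k : ι} (t : ℝ) (hki : k ≠ i)
    (hkj : k ≠ j) : (v + t • transferDir v i j) k = v k := by
  simp [transferDir, hki, hkj]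

theorem abs_add_smul_transferDir_apply_left {v : ι → ℝ} {i j : ι} {t : ℝ} (hij : i ≠ j)
    (hvi : v i ≠ 0) (ht : 0 ≤ t) : |(v + t • transferDir v i j) i| = |v i| + t := by
  have : (v + t • transferDir v i j) i = v i + t * SignType.sign (v i) := by
    simp [transferDir, hij]
  rw [this, abs_add_mul_sign hvi (by linarith [abs_nonneg (v i)])]

theorem abs_add_smul_transferDir_apply_right {v : ι → ℝ} {i j : ι} {t : ℝ} (hij : i ≠ j)
    (hvj : v j ≠ 0) (ht : t ≤ |v j|) : |(v + t • transferDir v i j) j| = |v j| - t := by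
  have : (v + t • transferDir v i j) j = v j + -t * SignType.sign (v j) := by
    simp [transferDir, hij.symm]
  rw [this, abs_add_mul_sign hvj (by linarith), sub_eq_add_neg]

end

section

variable {ι : Type*} [Fintype ι]

def sparseAtoms (θ : ℝ) (s : ℕ) (v : ι → ℝ) : Set (ι → ℝ) :=
  {u | #{j | u j ≠ 0} ≤ s ∧ (∀ j, u j ≠ 0 → v j ≠ 0) ∧ ∑ j, |u j| ≤ ∑ j, |v j| ∧ ∀ j, |u j| ≤ θ}

noncomputable def fracSupport (θ : ℝ) (v : ι → ℝ) : Finset ι := {j | v j ≠ 0 ∧ |v j| < θ}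

theorem sparseAtoms_mono {θ : ℝ} {s : ℕ} {v w : ι → ℝ} (hsupp : ∀ j, w j ≠ 0 → v j ≠ 0)
    (hnorm : ∑ j, |w j| ≤ ∑ j, |v j|) : sparseAtoms θ s w ⊆ sparseAtoms θ s v :=
  fun _ ⟨hcard, hu, hl1, hinf⟩ => ⟨hcard, fun j hj => hsupp j (hu j hj), hl1.trans hnorm, hinf⟩

theorem card_support_le_of_card_fracSupport_le_one {θ : ℝ} {s : ℕ} {v : ι → ℝ} (hθ : 0 < θ)
    (hinf : ∀ j, |v j| ≤ θ) (h1 : ∑ j, |v j| ≤ s * θ) (hF : #(fracSupport θ v) ≤ 1) :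
    #{j | v j ≠ 0} ≤ s := by
  classical
  set F := fracSupport θ v
  set G : Finset ι := {j | |v j| = θ}
  have hsupp : ({j | v j ≠ 0} : Finset ι) ⊆ G ∪ F := by
    intro j hj
    simp only [mem_filter, mem_univ, true_and, mem_union, G, F, fracSupport] at hj ⊢
    rcases (hinf j).lt_or_eq with h | h
    · exact Or.inr ⟨hj, h⟩
    · exact Or.inl h
  have hdisj : Disjoint G F := by
    simp only [disjoint_left, mem_filter, mem_univ, true_and, G, F, fracSupport]
    exact fun j hG hF => hF.2.ne hG
  have hsum : #G * θ + ∑ j ∈ F, |v j| ≤ s * θ := by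
    have hG : ∑ j ∈ G, |v j| = #G * θ := by
      rw [sum_congr rfl fun j hj => (mem_filter.mp hj).2, sum_const, nsmul_eq_mul]
    calc #G * θ + ∑ j ∈ F, |v j| = ∑ j ∈ G ∪ F, |v j| := by rw [sum_union hdisj, hG]
      _ ≤ ∑ j, |v j| := sum_le_sum_of_subset_of_nonneg (subset_univ _) fun _ _ _ => abs_nonneg _
      _ ≤ s * θ := h1
  have hGF : #G + #F ≤ s := by
    rcases F.eq_empty_or_nonempty with hF0 | hFne
    · rw [hF0, sum_empty, add_zero] at hsum
      rw [hF0, card_empty, add_zero]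
      exact_mod_cast le_of_mul_le_mul_right hsum hθ
    · have hpos : 0 < ∑ j ∈ F, |v j| :=
        sum_pos (fun j hj => abs_pos.mpr (mem_filter.mp hj).2.1) hFne
      have : (#G : ℝ) < s := lt_of_mul_lt_mul_right (by linarith) hθ.le
      have : #G < s := by exact_mod_cast this
      omega
  exact (card_le_card hsupp).trans ((card_union_le G F).trans hGF)

variable [DecidableEq ι]

theorem sum_abs_add_smul_transferDir {v : ι → ℝ} {i j : ι} {t : ℝ} (hij : i ≠ j)
    (hvi : v i ≠ 0) (hvj : v j ≠ 0) (ht₀ : 0 ≤ t) (ht : t ≤ |v j|) :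
    ∑ k, |(v + t • transferDir v i j) k| = ∑ k, |v k| := by
  have : ∑ k, (|(v + t • transferDir v i j) k| - |v k|) = 0 := by
    rw [Fintype.sum_eq_add i j hij fun k hk => by
        rw [add_smul_transferDir_apply_of_ne t hk.1 hk.2, sub_self],
      abs_add_smul_transferDir_apply_left hij hvi ht₀,
      abs_add_smul_transferDir_apply_right hij hvj ht]
    ring
  rwa [sum_sub_distrib, sub_eq_zero] at this

theorem exists_transfer {θ : ℝ} {v : ι → ℝ} {i j : ι} (hinf : ∀ k, |v k| ≤ θ) (hij : i ≠ j)
    (hi : i ∈ fracSupport θ v) (hj : j ∈ fracSupport θ v) :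
    ∃ t : ℝ, 0 < t ∧ ∃ w, w = v + t • transferDir v i j ∧ (∀ k, |w k| ≤ θ) ∧
      ∑ k, |w k| = ∑ k, |v k| ∧ (∀ k, w k ≠ 0 → v k ≠ 0) ∧ fracSupport θ w ⊂ fracSupport θ v := by
  obtain ⟨hvi, hvi_lt⟩ : v i ≠ 0 ∧ |v i| < θ := by simpa [fracSupport] using hi
  obtain ⟨hvj, -⟩ : v j ≠ 0 ∧ |v j| < θ := by simpa [fracSupport] using hj
  -- The largest step keeping `|w i| ≤ θ` and `|w j| ≥ 0`: one of the two stops being fractional.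
  set t := min (θ - |v i|) |v j| with ht_def
  have ht_left : t ≤ θ - |v i| := min_le_left _ _
  have ht_right : t ≤ |v j| := min_le_right _ _
  have ht : 0 < t := lt_min (by linarith) (abs_pos.mpr hvj)
  set w := v + t • transferDir v i j
  have hwi : |w i| = |v i| + t := abs_add_smul_transferDir_apply_left hij hvi ht.le
  have hwj : |w j| = |v j| - t := abs_add_smul_transferDir_apply_right hij hvj ht_right
  have hcases : ∀ k, k = i ∨ k = j ∨ w k = v k := fun k => by
    by_cases hki : k = i
    · exact .inl hki
    by_cases hkj : k = j
    · exact .inr (.inl hkj)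
    · exact .inr (.inr (add_smul_transferDir_apply_of_ne t hki hkj))
  refine ⟨t, ht, w, rfl, fun k => ?_, sum_abs_add_smul_transferDir hij hvi hvj ht.le ht_right,
    fun k hk => ?_, (ssubset_iff_of_subset fun k hk => ?_).mpr ?_⟩
  · rcases hcases k with rfl | rfl | hk
    · linarith
    · linarith [abs_nonneg (v k), hinf k]
    · exact hk ▸ hinf k
  · rcases hcases k with rfl | rfl | hk'
    exacts [hvi, hvj, hk' ▸ hk]
  · rcases hcases k with rfl | rfl | hk'
    exacts [hi, hj, by simpa [fracSupport, hk'] using hk]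
  · rcases le_total (θ - |v i|) |v j| with h | h
    · have : |w i| = θ := by rw [hwi, ht_def, min_eq_left h]; ring
      exact ⟨i, hi, by simp [fracSupport, this]⟩
    · have : w j = 0 := abs_eq_zero.mp (by rw [hwj, ht_def, min_eq_right h, sub_self])
      exact ⟨j, hj, by simp [fracSupport, this]⟩

theorem mem_convexHull_sparseAtoms {θ : ℝ} {s : ℕ} (hθ : 0 < θ) {v : ι → ℝ}
    (hinf : ∀ j, |v j| ≤ θ) (h1 : ∑ j, |v j| ≤ s * θ) : v ∈ convexHull ℝ (sparseAtoms θ s v) := by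
  induction hn : #(fracSupport θ v) using Nat.strong_induction_on generalizing v with
  | _ n ih =>
  rcases le_or_gt #(fracSupport θ v) 1 with hF | hF
  · exact subset_convexHull ℝ _
      ⟨card_support_le_of_card_fracSupport_le_one hθ hinf h1 hF, fun _ h => h, le_rfl, hinf⟩
  have step : ∀ {i j}, i ≠ j → i ∈ fracSupport θ v → j ∈ fracSupport θ v →
      ∃ t : ℝ, 0 < t ∧ v + t • transferDir v i j ∈ convexHull ℝ (sparseAtoms θ s v) := by
    intro i j hij hi hj
    obtain ⟨t, ht, w, rfl, hwinf, hwl1, hwsupp, hwF⟩ := exists_transfer hinf hij hi hj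
    exact ⟨t, ht, convexHull_mono (sparseAtoms_mono hwsupp hwl1.le)
      (ih _ (hn ▸ card_lt_card hwF) hwinf (hwl1 ▸ h1) rfl)⟩
  obtain ⟨i, hi, j, hj, hij⟩ := one_lt_card.mp hF
  obtain ⟨a, ha, hw₁⟩ := step hij hi hj
  obtain ⟨b, hb, hw₂⟩ := step hij.symm hj hi
  rw [transferDir_swap, smul_neg, ← sub_eq_add_neg] at hw₂
  exact (convex_convexHull ℝ _).segment_subset hw₁ hw₂ (mem_segment_add_smul_sub_smul v _ ha hb)

end

theorem stmt_7_general (p : ℕ) (v : Fin p → ℝ) (θ : ℝ) (s : ℕ) (hθ : 0 < θ)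
    (hinf : ∀ i, |v i| ≤ θ) (h1 : ∑ i, |v i| ≤ s * θ) :
    ∃ (N : ℕ) (lam : Fin N → ℝ) (u : Fin N → Fin p → ℝ),
      (∀ i, 0 ≤ lam i) ∧ (∑ i, lam i = 1) ∧
      (∀ j, v j = ∑ i, lam i * u i j) ∧
      (∀ i, (Finset.univ.filter fun j => u i j ≠ 0).card ≤ s) ∧
      (∀ i j, u i j ≠ 0 → v j ≠ 0) ∧
      (∀ i, ∑ j, |u i j| ≤ ∑ j, |v j|) ∧
      (∀ i j, |u i j| ≤ θ) := by
  obtain ⟨N, lam, u, hlam, hsum, hu, hv⟩ :=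
    exists_fin_of_mem_convexHull (mem_convexHull_sparseAtoms hθ hinf h1)
  refine ⟨N, lam, u, hlam, hsum, fun j => ?_, fun i => (hu i).1, fun i => (hu i).2.1,
    fun i => (hu i).2.2.1, fun i => (hu i).2.2.2⟩
  simp only [← hv, Finset.sum_apply, Pi.smul_apply, smul_eq_mul]

theorem stmt_7 (p : ℕ) (v : Fin p → ℝ) (θ : ℝ) (s : ℕ) (hθ : 0 < θ) (hs : 0 < s)
    (hinf : ∀ i, |v i| ≤ θ) (h1 : ∑ i, |v i| ≤ s * θ) :
    ∃ (N : ℕ) (lam : Fin N → ℝ) (u : Fin N → Fin p → ℝ),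
      (∀ i, 0 ≤ lam i) ∧ (∑ i, lam i = 1) ∧
      (∀ j, v j = ∑ i, lam i * u i j) ∧
      (∀ i, (Finset.univ.filter fun j => u i j ≠ 0).card ≤ s) ∧
      (∀ i j, u i j ≠ 0 → v j ≠ 0) ∧
      (∀ i, ∑ j, |u i j| ≤ ∑ j, |v j|) ∧
      (∀ i j, |u i j| ≤ θ) :=
  stmt_7_general p v θ s hθ hinf h1
end

section
/- If x, y ∈ ℂ^d with ⟨x, y⟩ a nonnegative real number, then ‖x x* − y y*‖_F² ≥ (1/2)‖y‖₂² ‖x − y‖₂². -/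
open Finset Complex

theorem stmt_8 (d : ℕ) (x y : Fin d → ℂ)
    (him : (∑ i, x i * starRingEnd ℂ (y i)).im = 0)
    (hre : 0 ≤ (∑ i, x i * starRingEnd ℂ (y i)).re) :
    (1/2) * (∑ i, ‖y i‖^2) * (∑ i, ‖x i - y i‖^2)
      ≤ ∑ i, ∑ j, ‖x i * starRingEnd ℂ (x j) - y i * starRingEnd ℂ (y j)‖^2 := by
  set z : ℂ := ∑ i, x i * starRingEnd ℂ (y i) with hz
  set a : ℝ := ∑ i, ‖x i‖^2 with ha
  set b : ℝ := ∑ i, ‖y i‖^2 with hb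
  set t : ℝ := z.re with ht
  have key1 : ∀ u v : ℂ, ‖u - v‖^2 = ‖u‖^2 + ‖v‖^2 - 2*(u * starRingEnd ℂ v).re := by
    intro u v
    simp only [Complex.sq_norm, Complex.normSq_apply, Complex.sub_re,
      Complex.sub_im, Complex.mul_re, Complex.conj_re, Complex.conj_im]
    ring
  have ha0 : 0 ≤ a := Finset.sum_nonneg fun i _ => sq_nonneg _
  have hb0 : 0 ≤ b := Finset.sum_nonneg fun i _ => sq_nonneg _
  -- Step 1 : sum of ‖x i - y i‖²
  have h1 : (∑ i, ‖x i - y i‖^2) = a + b - 2 * t := by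
    have : (∑ i, ‖x i - y i‖^2)
        = ∑ i, (‖x i‖^2 + ‖y i‖^2 - 2*(x i * starRingEnd ℂ (y i)).re) := by
      exact Finset.sum_congr rfl fun i _ => key1 _ _
    rw [this, Finset.sum_sub_distrib, Finset.sum_add_distrib, ← Finset.mul_sum,
      ← Complex.re_sum, ← hz, ← ha, ← hb, ← ht]
  -- Step 2 : the double sum
  have h2 : (∑ i, ∑ j, ‖x i * starRingEnd ℂ (x j) - y i * starRingEnd ℂ (y j)‖^2)
      = a * a + b * b - 2 * (t^2) := by
    have hterm : ∀ i j : Fin d,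
        ‖x i * starRingEnd ℂ (x j) - y i * starRingEnd ℂ (y j)‖^2
        = ‖x i‖^2 * ‖x j‖^2 + ‖y i‖^2 * ‖y j‖^2
          - 2 * ((x i * starRingEnd ℂ (y i)) *
              starRingEnd ℂ (x j * starRingEnd ℂ (y j))).re := by
      intro i j
      rw [key1]
      have e1 : ‖x i * starRingEnd ℂ (x j)‖^2 = ‖x i‖^2 * ‖x j‖^2 := by
        rw [norm_mul, RCLike.norm_conj]; ring
      have e2 : ‖y i * starRingEnd ℂ (y j)‖^2 = ‖y i‖^2 * ‖y j‖^2 := by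
        rw [norm_mul, RCLike.norm_conj]; ring
      have e3 : (x i * starRingEnd ℂ (x j)) * starRingEnd ℂ (y i * starRingEnd ℂ (y j))
          = (x i * starRingEnd ℂ (y i)) * starRingEnd ℂ (x j * starRingEnd ℂ (y j)) := by
        simp only [map_mul, RingHomCompTriple.comp_apply, RingHom.id_apply,
          Complex.conj_conj]
        ring
      rw [e1, e2, e3]
    have hsum : (∑ i, ∑ j, ‖x i * starRingEnd ℂ (x j) - y i * starRingEnd ℂ (y j)‖^2)
        = ∑ i, ∑ j, (‖x i‖^2 * ‖x j‖^2 + ‖y i‖^2 * ‖y j‖^2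
          - 2 * ((x i * starRingEnd ℂ (y i)) *
              starRingEnd ℂ (x j * starRingEnd ℂ (y j))).re) :=
      Finset.sum_congr rfl fun i _ => Finset.sum_congr rfl fun j _ => hterm i j
    have hcross : (∑ i, ∑ j, ((x i * starRingEnd ℂ (y i)) *
        starRingEnd ℂ (x j * starRingEnd ℂ (y j))).re) = t^2 := by
      have : (∑ i, ∑ j, ((x i * starRingEnd ℂ (y i)) *
          starRingEnd ℂ (x j * starRingEnd ℂ (y j)))) = z * starRingEnd ℂ z := by
        rw [hz, map_sum, Finset.sum_mul_sum]
      calc (∑ i, ∑ j, ((x i * starRingEnd ℂ (y i)) *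
          starRingEnd ℂ (x j * starRingEnd ℂ (y j))).re)
          = (∑ i, ∑ j, ((x i * starRingEnd ℂ (y i)) *
              starRingEnd ℂ (x j * starRingEnd ℂ (y j)))).re := by
            rw [Complex.re_sum]
            exact Finset.sum_congr rfl fun i _ => (Complex.re_sum _ _).symm
        _ = (z * starRingEnd ℂ z).re := by rw [this]
        _ = t^2 := by
            simp only [Complex.mul_re, Complex.conj_re, Complex.conj_im, ← ht, him]
            ring
    rw [hsum]
    simp only [Finset.sum_sub_distrib, Finset.sum_add_distrib, ← Finset.mul_sum]
    rw [hcross, ← Finset.sum_mul, ← Finset.sum_mul, ← ha, ← hb]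
  -- Step 3 : Cauchy–Schwarz : t² ≤ a * b
  have h3 : t^2 ≤ a * b := by
    have habs : t ≤ ‖z‖ := le_trans (le_abs_self _) (Complex.abs_re_le_norm z)
    have hnz : ‖z‖ ≤ ∑ i, ‖x i‖ * ‖y i‖ := by
      calc ‖z‖ ≤ ∑ i, ‖x i * starRingEnd ℂ (y i)‖ := by
            rw [hz]; exact norm_sum_le _ _
        _ = ∑ i, ‖x i‖ * ‖y i‖ := by
            exact Finset.sum_congr rfl fun i _ => by rw [norm_mul, RCLike.norm_conj]
    have hcs : (∑ i, ‖x i‖ * ‖y i‖)^2 ≤ a * b :=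
      Finset.sum_mul_sq_le_sq_mul_sq _ _ _
    have ht2 : t^2 ≤ (∑ i, ‖x i‖ * ‖y i‖)^2 := by
      have h0 : 0 ≤ t := hre
      have := le_trans habs hnz
      nlinarith
    linarith
  rw [h1, h2]
  nlinarith [h3, hre, sq_nonneg (a - b), sq_nonneg (a - 2*t), sq_nonneg (b - 2*t),
    mul_nonneg hb0 hre, sq_nonneg (a - b + t), sq_nonneg (a + b - 2*t), mul_nonneg ha0 hb0]
end

section
/- For rank-one Hermitian matrices: for any x, y ∈ ℂ^n with ⟨x,y⟩ ≥ 0 real and ‖y‖₂ > 0, one has min over unimodular c ∈ ℂ of ‖c·x − y‖₂ ≤ ‖x − y‖₂ ≤ √2 · ‖x x* − y y*‖_F / ‖y‖₂. -/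
open Finset Complex

lemma key_nsq (a b : ℂ) : ‖a - b‖^2 = ‖a‖^2 + ‖b‖^2 - 2*(a * starRingEnd ℂ b).re := by
  simp [Complex.sq_norm, Complex.normSq_apply, Complex.sub_re,
    Complex.sub_im, Complex.mul_re, Complex.conj_re, Complex.conj_im]
  ring

theorem stmt_9 (n : ℕ) (x y : Fin n → ℂ)
    (him : (∑ i, x i * starRingEnd ℂ (y i)).im = 0)
    (hre : 0 ≤ (∑ i, x i * starRingEnd ℂ (y i)).re)
    (hy : 0 < Real.sqrt (∑ i, ‖y i‖^2)) :
    (⨅ c : {c : ℂ // ‖c‖ = 1}, Real.sqrt (∑ i, ‖(c : ℂ) * x i - y i‖^2))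
        ≤ Real.sqrt (∑ i, ‖x i - y i‖^2) ∧
    Real.sqrt (∑ i, ‖x i - y i‖^2)
      ≤ Real.sqrt 2 *
        Real.sqrt (∑ i, ∑ j, ‖x i * starRingEnd ℂ (x j) - y i * starRingEnd ℂ (y j)‖^2)
          / Real.sqrt (∑ i, ‖y i‖^2) := by
  constructor
  · have hbdd : BddBelow (Set.range fun c : {c : ℂ // ‖c‖ = 1} =>
        Real.sqrt (∑ i, ‖(c : ℂ) * x i - y i‖^2)) := by
      refine ⟨0, ?_⟩
      rintro a ⟨c, rfl⟩
      exact Real.sqrt_nonneg _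
    have := ciInf_le hbdd (⟨1, by simp⟩ : {c : ℂ // ‖c‖ = 1})
    simpa using this
  · set A := ∑ i, ‖x i‖^2 with hA
    set B := ∑ i, ‖y i‖^2 with hB
    set S := ∑ i, x i * starRingEnd ℂ (y i) with hS
    set T := S.re with hT
    have hsum1 : (∑ i, ‖x i - y i‖^2) = A + B - 2*T := by
      rw [Finset.sum_congr rfl fun i _ => key_nsq (x i) (y i)]
      simp [Finset.sum_add_distrib, Finset.sum_sub_distrib, ← Finset.mul_sum, hT, hS,
        Complex.re_sum, ← hA, ← hB]
    have key2 : ∀ i j, ‖x i * starRingEnd ℂ (x j) - y i * starRingEnd ℂ (y j)‖^2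
        = ‖x i‖^2*‖x j‖^2 + ‖y i‖^2*‖y j‖^2
          - 2*((x i * starRingEnd ℂ (y i)) * starRingEnd ℂ (x j * starRingEnd ℂ (y j))).re := by
      intro i j
      rw [key_nsq]
      have h1 : x i * starRingEnd ℂ (x j) * starRingEnd ℂ (y i * starRingEnd ℂ (y j))
          = (x i * starRingEnd ℂ (y i)) * starRingEnd ℂ (x j * starRingEnd ℂ (y j)) := by
        simp [map_mul]; ring
      rw [h1]
      simp [norm_mul, mul_pow]
    have hsum2 : (∑ i, ∑ j, ‖x i * starRingEnd ℂ (x j) - y i * starRingEnd ℂ (y j)‖^2)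
        = A^2 + B^2 - 2*T^2 := by
      have h2 : (∑ i, ∑ j, ((x i * starRingEnd ℂ (y i)) * starRingEnd ℂ (x j * starRingEnd ℂ (y j))).re)
          = (S * starRingEnd ℂ S).re := by
        simp only [← Complex.re_sum]
        congr 1
        rw [hS, map_sum, Finset.sum_mul_sum]
      have h3 : (S * starRingEnd ℂ S).re = T^2 := by
        rw [Complex.mul_re]
        simp [hT, him, Complex.conj_re, Complex.conj_im]
        ring
      calc (∑ i, ∑ j, ‖x i * starRingEnd ℂ (x j) - y i * starRingEnd ℂ (y j)‖^2)
          = ∑ i, ∑ j, (‖x i‖^2*‖x j‖^2 + ‖y i‖^2*‖y j‖^2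
            - 2*((x i * starRingEnd ℂ (y i)) * starRingEnd ℂ (x j * starRingEnd ℂ (y j))).re) := by
            exact Finset.sum_congr rfl fun i _ => Finset.sum_congr rfl fun j _ => key2 i j
        _ = A^2 + B^2 - 2*T^2 := by
            simp only [Finset.sum_add_distrib, Finset.sum_sub_distrib, ← Finset.mul_sum]
            simp only [← Finset.sum_mul]
            rw [h2, h3, hA, hB]
            ring
    have hp0 : (0:ℝ) ≤ ∑ i, ‖x i - y i‖^2 :=
      Finset.sum_nonneg fun i _ => sq_nonneg _
    have hA0 : (0:ℝ) ≤ A := hA ▸ Finset.sum_nonneg fun i _ => sq_nonneg _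
    have hP : 0 ≤ A + B - 2*T := hsum1 ▸ hp0
    have hEkey : (A + B - 2*T) * B ≤ 2 * (A^2 + B^2 - 2*T^2) := by
      nlinarith [mul_nonneg hre hP, mul_nonneg hA0 hP, sq_nonneg (A - B)]
    rw [hsum1, hsum2]
    rw [le_div_iff₀ hy, ← Real.sqrt_mul hP, ← Real.sqrt_mul (by norm_num : (0:ℝ) ≤ 2)]
    exact Real.sqrt_le_sqrt hEkey
end

section
/- For a Hermitian matrix H = x x* − x₀ x₀* where x, x₀ ∈ ℂ^n, ‖x‖₁ ≤ ‖x₀‖₁, and T₀ = supp(x₀), the ℓ¹ norm of H restricted off the T₀×T₀ block is at most the ℓ¹ norm of H restricted to the T₀×T₀ block: ‖H − H_{T₀,T₀}‖₁ ≤ ‖H_{T₀,T₀}‖₁. -/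
/-!
Off the `T₀ × T₀` block `x₀` vanishes, so there `|H i j| = |x i| |x j|` and the off-block mass is
`‖x‖₁² - ‖x_{T₀}‖₁²`. On the block, `|H i j| ≥ |x₀ i| |x₀ j| - |x i| |x j|`, so the block mass is at
least `‖x₀‖₁² - ‖x_{T₀}‖₁²`, and `‖x‖₁ ≤ ‖x₀‖₁` compares the two.
-/

open Finset

theorem Finset.sum_filter_not_mem_block_mul {ι R : Type*} [Fintype ι] [DecidableEq ι]
    [CommRing R] (s : Finset ι) (f g : ι → R) :
    ∑ p ∈ (univ ×ˢ univ).filter (fun p : ι × ι => ¬(p.1 ∈ s ∧ p.2 ∈ s)), f p.1 * g p.2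
      = (∑ i, f i) * (∑ j, g j) - (∑ i ∈ s, f i) * (∑ j ∈ s, g j) := by
  have hblock : (univ ×ˢ univ).filter (fun p : ι × ι => p.1 ∈ s ∧ p.2 ∈ s) = s ×ˢ s := by
    ext p; simp
  have hsplit := sum_filter_add_sum_filter_not (univ ×ˢ univ)
    (fun p : ι × ι => p.1 ∈ s ∧ p.2 ∈ s) (fun p => f p.1 * g p.2)
  rw [hblock, sum_product, sum_product, ← sum_mul_sum, ← sum_mul_sum] at hsplit
  rw [← hsplit, add_sub_cancel_left]

section

variable {ι 𝕜 : Type*} [RCLike 𝕜]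

theorem norm_mul_conj_sub_norm_mul_conj_le (a b c d : 𝕜) :
    ‖c‖ * ‖d‖ - ‖a‖ * ‖b‖ ≤ ‖a * starRingEnd 𝕜 b - c * starRingEnd 𝕜 d‖ := by
  simpa [norm_sub_rev, norm_mul] using norm_sub_norm_le (c * starRingEnd 𝕜 d) (a * starRingEnd 𝕜 b)

theorem sq_sum_norm_sub_sq_sum_norm_le_sum_sum_norm (s : Finset ι) (x y : ι → 𝕜) :
    (∑ i ∈ s, ‖y i‖) * (∑ j ∈ s, ‖y j‖) - (∑ i ∈ s, ‖x i‖) * (∑ j ∈ s, ‖x j‖)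
      ≤ ∑ i ∈ s, ∑ j ∈ s, ‖x i * starRingEnd 𝕜 (x j) - y i * starRingEnd 𝕜 (y j)‖ := by
  rw [sum_mul_sum, sum_mul_sum, ← sum_sub_distrib]
  refine sum_le_sum fun i _ => ?_
  rw [← sum_sub_distrib]
  exact sum_le_sum fun j _ => norm_mul_conj_sub_norm_mul_conj_le _ _ _ _

end

theorem stmt_13 (n : ℕ) (x x₀ : Fin n → ℂ)
    (h1 : ∑ i, ‖x i‖ ≤ ∑ i, ‖x₀ i‖) (T₀ : Finset (Fin n))
    (hT₀ : ∀ i, x₀ i ≠ 0 ↔ i ∈ T₀)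
    (H : Matrix (Fin n) (Fin n) ℂ)
    (hH : ∀ i j, H i j = x i * starRingEnd ℂ (x j) - x₀ i * starRingEnd ℂ (x₀ j)) :
    ∑ p ∈ (Finset.univ ×ˢ Finset.univ).filter (fun p : Fin n × Fin n => ¬(p.1 ∈ T₀ ∧ p.2 ∈ T₀)),
        ‖H p.1 p.2‖
      ≤ ∑ i ∈ T₀, ∑ j ∈ T₀, ‖H i j‖ := by
  have hx₀ : ∀ i ∉ T₀, x₀ i = 0 := fun i hi => not_not.mp (mt (hT₀ i).mp hi)
  have hoff : ∀ p ∈ (univ ×ˢ univ).filter (fun p : Fin n × Fin n => ¬(p.1 ∈ T₀ ∧ p.2 ∈ T₀)),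
      ‖H p.1 p.2‖ = ‖x p.1‖ * ‖x p.2‖ := by
    intro p hp
    rcases not_and_or.mp (mem_filter.mp hp).2 with h | h <;> simp [hH, hx₀ _ h]
  have hx₀_sum : ∑ i ∈ T₀, ‖x₀ i‖ = ∑ i, ‖x₀ i‖ :=
    sum_subset (subset_univ _) fun i _ hi => by simp [hx₀ i hi]
  calc _ = ∑ p ∈ (univ ×ˢ univ).filter (fun p : Fin n × Fin n => ¬(p.1 ∈ T₀ ∧ p.2 ∈ T₀)),
          ‖x p.1‖ * ‖x p.2‖ := sum_congr rfl hoff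
    _ = (∑ i, ‖x i‖) * (∑ j, ‖x j‖) - (∑ i ∈ T₀, ‖x i‖) * (∑ j ∈ T₀, ‖x j‖) :=
          sum_filter_not_mem_block_mul T₀ (fun i => ‖x i‖) (fun i => ‖x i‖)
    _ ≤ (∑ i, ‖x₀ i‖) * (∑ j, ‖x₀ j‖) - (∑ i ∈ T₀, ‖x i‖) * (∑ j ∈ T₀, ‖x j‖) := by
          gcongr
    _ ≤ ∑ i ∈ T₀, ∑ j ∈ T₀, ‖H i j‖ := by
          simpa only [hH, hx₀_sum] using sq_sum_norm_sub_sq_sum_norm_le_sum_sum_norm T₀ x x₀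
end
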